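/- arXiv:2307.01303 — 2 statements merged into one kernel-verified Lean document; each statement's English description precedes it below -/
import Mathlib

section
/- Let K be an algebraically closed field of characteristic zero and let R be a nonzero finitely generated commutative K-algebra having exactly one prime ideal. Let p be a prime number and n ≥ 1. Then: (a) the map u ↦ u^{p^n} on the unit group R^× is surjective; and (b) its kernel is exactly the image under the structure map K → R of the group μ_{p^n}(K) = {c ∈ K : c^{p^n} = 1} of p^n-th roots of unity of K. In other words, there is a short exact sequence 1 → μ_{p^n}(K) → R^× → R^× → 1 where the last map is raising to the p^n-th power. -/
/-!
A finitely generated `K`-algebra with a single prime ideal is local with maximal ideal its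
nilradical, and by the Nullstellensatz its residue field is `K`: every element is a constant
`c : K` up to a nilpotent. As `p ^ n` is invertible, Newton's method for nilpotent ideals shows that
`X ^ (p ^ n) - u` has exactly one root nilpotently close to any approximate root that is a nonzero
constant. For surjectivity, the approximate root is a `p ^ n`-th root of `c` in the algebraically
closed field `K`; for the kernel, `c` is itself a root of unity and uniqueness gives `u = c`.
-/

open Polynomial

theorem existsUnique_pow_eq_of_isNilpotent_pow_sub {S : Type*} [CommRing S] {m : ℕ} {x u : S}
    (h : IsNilpotent (x ^ m - u)) (h' : IsUnit ((m : S) * x ^ (m - 1))) :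
    ∃! v, IsNilpotent (x - v) ∧ v ^ m = u := by
  have hP' : IsUnit (aeval x (derivative (X ^ m - C u))) := by
    simpa [derivative_X_pow] using h'
  simpa [sub_eq_zero] using
    existsUnique_nilpotent_sub_and_aeval_eq_zero (P := X ^ m - C u) (by simpa) hP'

theorem algebraMap_surjective_quotient_of_isMaximal (K : Type*) {R : Type*} [Field K]
    [IsAlgClosed K] [CommRing R] [Algebra K R] [Algebra.FiniteType K R] (M : Ideal R)
    [M.IsMaximal] : Function.Surjective (algebraMap K (R ⧸ M)) := by
  let := Ideal.Quotient.field M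
  have : Module.Finite K (R ⧸ M) := finite_of_finite_type_of_isJacobsonRing K (R ⧸ M)
  exact IsAlgClosed.algebraMap_bijective_of_isIntegral.2

theorem existsUnique_pow_eq_of_isNilpotent_algebraMap_pow_sub {K R : Type*} [Field K]
    [CommRing R] [Algebra K R] {m : ℕ} (hm : (m : K) ≠ 0) {c : K} (hc : c ≠ 0) {u : R}
    (h : IsNilpotent (algebraMap K R c ^ m - u)) :
    ∃! v, IsNilpotent (algebraMap K R c - v) ∧ v ^ m = u := by
  refine existsUnique_pow_eq_of_isNilpotent_pow_sub h ?_
  have : (m : R) * algebraMap K R c ^ (m - 1) = algebraMap K R (m * c ^ (m - 1)) := by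
    rw [map_mul, map_natCast, map_pow]
  rw [this]
  exact (isUnit_iff_ne_zero.2 (mul_ne_zero hm (pow_ne_zero _ hc))).map _

section NilradicalMaximal

variable (K : Type*) {R : Type*} [Field K] [CommRing R] [Algebra K R] [(nilradical R).IsMaximal]

theorem exists_isNilpotent_sub_algebraMap [IsAlgClosed K] [Algebra.FiniteType K R] (r : R) :
    ∃ c : K, IsNilpotent (algebraMap K R c - r) := by
  obtain ⟨c, hc⟩ := algebraMap_surjective_quotient_of_isMaximal K (nilradical R)
    (Ideal.Quotient.mk _ r)
  refine ⟨c, mem_nilradical.1 (Ideal.Quotient.eq_zero_iff_mem.1 ?_)⟩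
  rw [map_sub, ← hc, Ideal.Quotient.mk_algebraMap, sub_self]

variable {K} [IsAlgClosed K] [Algebra.FiniteType K R] {m : ℕ}

theorem exists_pow_eq_of_isMaximal_nilradical (hm : (m : K) ≠ 0) (u : Rˣ) :
    ∃ v : Rˣ, v ^ m = u := by
  have := IsLocalRing.of_isMaximal_nilradical R
  have hm0 : m ≠ 0 := by rintro rfl; exact hm Nat.cast_zero
  obtain ⟨c, hc⟩ := exists_isNilpotent_sub_algebraMap K (u : R)
  have hc0 : c ≠ 0 := by
    rintro rfl
    rw [map_zero, zero_sub, isNilpotent_neg_iff] at hc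
    exact hc.not_isUnit u.isUnit
  obtain ⟨d, rfl⟩ := IsAlgClosed.exists_pow_nat_eq c (Nat.pos_of_ne_zero hm0)
  obtain ⟨v, ⟨-, hv⟩, -⟩ := existsUnique_pow_eq_of_isNilpotent_algebraMap_pow_sub
    (u := (u : R)) hm (ne_zero_pow hm0 hc0) (by rwa [map_pow] at hc)
  obtain ⟨w, rfl⟩ := (isUnit_pow_iff hm0).1 (hv ▸ u.isUnit)
  exact ⟨w, Units.ext (by rw [Units.val_pow_eq_pow_val, hv])⟩

theorem units_pow_eq_one_iff_of_isMaximal_nilradical (hm : (m : K) ≠ 0) (u : Rˣ) :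
    u ^ m = 1 ↔ ∃ c : K, c ^ m = 1 ∧ (u : R) = algebraMap K R c := by
  have := IsLocalRing.of_isMaximal_nilradical R
  have hm0 : m ≠ 0 := by rintro rfl; exact hm Nat.cast_zero
  constructor
  · intro hu
    have huR : (u : R) ^ m = 1 := by rw [← Units.val_pow_eq_pow_val, hu, Units.val_one]
    obtain ⟨c, hc⟩ := exists_isNilpotent_sub_algebraMap K (u : R)
    have hcm : c ^ m = 1 := by
      have : IsNilpotent (algebraMap K R (c ^ m - 1)) := by
        obtain ⟨z, hz⟩ := sub_dvd_pow_sub_pow (algebraMap K R c) u m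
        rw [map_sub, map_pow, map_one, ← huR, hz]
        exact (Commute.all _ _).isNilpotent_mul_right hc
      exact sub_eq_zero.1 ((IsNilpotent.map_iff (algebraMap K R).injective).1 this).eq_zero
    have hc0 : c ≠ 0 := by rintro rfl; rw [zero_pow hm0] at hcm; exact zero_ne_one hcm
    have hcR : algebraMap K R c ^ m = 1 := by rw [← map_pow, hcm, map_one]
    obtain ⟨v, -, hv⟩ := existsUnique_pow_eq_of_isNilpotent_algebraMap_pow_sub
      (R := R) (u := 1) hm hc0 (by rw [hcR, sub_self]; exact IsNilpotent.zero)
    exact ⟨c, hcm, (hv _ ⟨hc, huR⟩).trans (hv _ ⟨by simp, hcR⟩).symm⟩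
  · rintro ⟨c, hcm, huc⟩
    ext
    rw [Units.val_pow_eq_pow_val, huc, ← map_pow, hcm, map_one, Units.val_one]

end NilradicalMaximal

theorem stmt4_general (K R : Type*) [Field K] [IsAlgClosed K] [CharZero K] [CommRing R]
    [Algebra K R] [Algebra.FiniteType K R]
    (hone : ∃! P : Ideal R, P.IsPrime)
    (p : ℕ) (hp : p.Prime) (n : ℕ) :
    (∀ u : Rˣ, ∃ v : Rˣ, v ^ p ^ n = u) ∧
    (∀ u : Rˣ, u ^ p ^ n = 1 ↔ ∃ c : K, c ^ p ^ n = 1 ∧ (u : R) = algebraMap K R c) := by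
  have : (nilradical R).IsMaximal := ((Ring.krullDimLE_zero_and_isLocalRing_tfae R).out 1 3).1 hone
  have hm : ((p ^ n : ℕ) : K) ≠ 0 := Nat.cast_ne_zero.2 (pow_ne_zero n hp.ne_zero)
  exact ⟨exists_pow_eq_of_isMaximal_nilradical hm,
    units_pow_eq_one_iff_of_isMaximal_nilradical hm⟩

/-- Let `K` be an algebraically closed field of characteristic zero and
`R` a nonzero finitely generated commutative `K`-algebra with exactly one prime ideal,
`p` a prime and `n ≥ 1`. Then `u ↦ u ^ (p ^ n)` is surjective on `Rˣ`, and its kernel is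
exactly the image of the group `μ_{p^n}(K)` of `p^n`-th roots of unity of `K`; i.e.,
`1 → μ_{p^n}(K) → Rˣ → Rˣ → 1` is exact with last map the `p^n`-th power map. -/
theorem stmt4 (K R : Type*) [Field K] [IsAlgClosed K] [CharZero K] [CommRing R]
    [Nontrivial R] [Algebra K R] [Algebra.FiniteType K R]
    (hone : ∃! P : Ideal R, P.IsPrime)
    (p : ℕ) (hp : p.Prime) (n : ℕ) (hn : 1 ≤ n) :
    (∀ u : Rˣ, ∃ v : Rˣ, v ^ p ^ n = u) ∧
    (∀ u : Rˣ, u ^ p ^ n = 1 ↔ ∃ c : K, c ^ p ^ n = 1 ∧ (u : R) = algebraMap K R c) :=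
  stmt4_general K R hone p hp n
end

section
/- Let K be an algebraically closed field of characteristic zero, let R and S be nonzero finitely generated commutative K-algebras each having exactly one prime ideal, let φ : R → S be a K-algebra homomorphism, let p be a prime number and n ≥ 0. Then the map from R^× to the set {(r, s) ∈ R^× × S^× : φ(r) = s^{p^n}} sending u ↦ (u^{p^n}, φ(u)) is a bijection. (Equivalently, the commutative square whose horizontal maps are the p^n-th power maps on R^× and on S^× and whose vertical maps are induced by φ is a pullback square of abelian groups.) -/
/-!
Modulo its nilradical such an algebra `A` is a field of finite type over `K`, hence `K` itself,
so every unit of `A` is a nonzero scalar plus a nilpotent. For `m` invertible in `K` the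
polynomial `X ^ m - r` has invertible derivative at units, so Newton's method lifts roots along
nilpotents uniquely: `m`-th roots of units exist, and the `m`-th roots of unity in `A` are
scalars. Those are mapped bijectively onto each other by `φ`, which is what the pullback square
needs.
-/

section NilpotentRoots

open Polynomial

variable {A : Type*} [CommRing A] {m : ℕ}

theorem isUnit_aeval_derivative_X_pow_sub_C (hm : IsUnit (m : A)) {x : A} (hx : IsUnit x)
    (r : A) : IsUnit (aeval x (derivative (X ^ m - C r))) := by
  simpa [derivative_X_pow] using hm.mul (hx.pow (m - 1))

theorem exists_pow_eq_of_isNilpotent_pow_sub (hm : IsUnit (m : A)) {x r : A} (hx : IsUnit x)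
    (h : IsNilpotent (x ^ m - r)) : ∃ y, IsNilpotent (x - y) ∧ y ^ m = r := by
  obtain ⟨y, ⟨hxy, hy⟩, -⟩ := existsUnique_nilpotent_sub_and_aeval_eq_zero (P := X ^ m - C r)
    (by simpa using h) (isUnit_aeval_derivative_X_pow_sub_C hm hx r)
  exact ⟨y, hxy, by simpa [sub_eq_zero] using hy⟩

theorem eq_of_pow_eq_pow_of_isNilpotent_sub (hm : IsUnit (m : A)) {x y : A} (hx : IsUnit x)
    (hxy : IsNilpotent (x - y)) (h : x ^ m = y ^ m) : x = y :=
  (existsUnique_nilpotent_sub_and_aeval_eq_zero (P := X ^ m - C (x ^ m)) (by simp)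
    (isUnit_aeval_derivative_X_pow_sub_C hm hx _)).unique ⟨by simp, by simp⟩ ⟨hxy, by simp [h]⟩

end NilpotentRoots

section ResidueScalars

variable {K A : Type*} [Field K] [IsAlgClosed K] [CommRing A] [Algebra K A]
  [Algebra.FiniteType K A]

theorem exists_isNilpotent_sub_algebraMap_s5 (hA : ∃! P : Ideal A, P.IsPrime) (a : A) :
    ∃ c : K, IsNilpotent (a - algebraMap K A c) := by
  have : (nilradical A).IsMaximal :=
    ((Ring.krullDimLE_zero_and_isLocalRing_tfae A).out 1 3).mp hA
  let := Ideal.Quotient.field (nilradical A)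
  have : Module.Finite K (A ⧸ nilradical A) := finite_of_finite_type_of_isJacobsonRing _ _
  obtain ⟨c, hc⟩ := (IsAlgClosed.algebraMap_bijective_of_isIntegral (k := K)).2
    (Ideal.Quotient.mk (nilradical A) a)
  refine ⟨c, ?_⟩
  rw [← mem_nilradical, ← Ideal.Quotient.eq_zero_iff_mem, map_sub,
    Ideal.Quotient.mk_algebraMap, hc, sub_self]

variable {m : ℕ}

theorem Units.exists_pow_eq_of_existsUnique_isPrime (hA : ∃! P : Ideal A, P.IsPrime)
    (hm : (m : K) ≠ 0) (r : Aˣ) : ∃ u : Aˣ, u ^ m = r := by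
  have hm0 : m ≠ 0 := by rintro rfl; exact hm Nat.cast_zero
  obtain ⟨c, hc⟩ := exists_isNilpotent_sub_algebraMap_s5 (K := K) hA r
  obtain ⟨d, rfl⟩ := IsAlgClosed.exists_pow_nat_eq c (Nat.pos_of_ne_zero hm0)
  have hnil : IsNilpotent (algebraMap K A d ^ m - r) := by
    simpa [← map_pow] using hc.neg
  have hd : IsUnit (algebraMap K A d) := by
    rw [← isUnit_pow_iff hm0, ← add_sub_cancel (r : A) (_ ^ m)]
    exact hnil.isUnit_add_left_of_commute r.isUnit (Commute.all _ _)
  obtain ⟨y, -, hy⟩ := exists_pow_eq_of_isNilpotent_pow_sub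
    (by simpa using hm.isUnit.map (algebraMap K A)) hd hnil
  have hyu : IsUnit y := (isUnit_pow_iff hm0).mp (hy ▸ r.isUnit)
  exact ⟨hyu.unit, Units.ext (by simpa using hy)⟩

theorem Units.exists_map_algebraMap_eq_of_pow_eq_one [Nontrivial A]
    (hA : ∃! P : Ideal A, P.IsPrime) (hm : (m : K) ≠ 0) {w : Aˣ} (hw : w ^ m = 1) :
    ∃ ζ : Kˣ, ζ ^ m = 1 ∧ Units.map (algebraMap K A : K →* A) ζ = w := by
  have hm0 : m ≠ 0 := by rintro rfl; exact hm Nat.cast_zero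
  have hw' : (w : A) ^ m = 1 := by simpa using congrArg Units.val hw
  obtain ⟨c, hc⟩ := exists_isNilpotent_sub_algebraMap_s5 (K := K) hA w
  have hcm : c ^ m = 1 := by
    obtain ⟨k, hk⟩ := sub_dvd_pow_sub_pow (w : A) (algebraMap K A c) m
    have : IsNilpotent (algebraMap K A (1 - c ^ m)) := by
      simpa [← hk, hw'] using (Commute.all _ k).isNilpotent_mul_right hc
    rw [IsNilpotent.map_iff (algebraMap K A).injective, isNilpotent_iff_eq_zero,
      sub_eq_zero] at this
    exact this.symm
  have hcu : IsUnit c := IsUnit.of_pow_eq_one hcm hm0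
  refine ⟨hcu.unit, Units.ext (by simpa using hcm), Units.ext ?_⟩
  refine eq_of_pow_eq_pow_of_isNilpotent_sub (by simpa using hm.isUnit.map (algebraMap K A))
    (hcu.map _) (by simpa using hc.neg) ?_
  simp [← map_pow, hcm, hw']

end ResidueScalars

section PowPullback

variable {G H : Type*} [CommGroup G] [CommGroup H] (f : G →* H) (m : ℕ)

theorem injective_pow_prodMk (h : ∀ w : G, w ^ m = 1 → f w = 1 → w = 1) :
    Function.Injective (fun u : G => (u ^ m, f u)) := by
  intro u v huv
  simp only [Prod.mk.injEq] at huv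
  rw [← div_eq_one]
  exact h _ (by rw [div_pow, huv.1, div_self']) (by rw [map_div, huv.2, div_self'])

theorem range_pow_prodMk (hsurj : ∀ r : G, ∃ u, u ^ m = r)
    (hker : ∀ t : H, t ^ m = 1 → ∃ w : G, w ^ m = 1 ∧ f w = t) :
    Set.range (fun u : G => (u ^ m, f u)) = {rs : G × H | f rs.1 = rs.2 ^ m} := by
  ext ⟨r, s⟩
  simp only [Set.mem_range, Set.mem_ofPred_eq, Prod.mk.injEq]
  constructor
  · rintro ⟨u, rfl, rfl⟩
    exact map_pow f u m
  · intro hrs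
    obtain ⟨u, rfl⟩ := hsurj r
    obtain ⟨w, hw, hfw⟩ := hker (s / f u) (by rw [div_pow, ← map_pow, hrs, div_self'])
    exact ⟨w * u, by rw [mul_pow, hw, one_mul], by rw [map_mul, hfw, div_mul_cancel]⟩

end PowPullback

/-- Let `K` be an algebraically closed field of characteristic zero,
`R`, `S` nonzero finitely generated commutative `K`-algebras each with exactly one prime
ideal, `φ : R →ₐ[K] S`, `p` a prime, `n ≥ 0`. Then `u ↦ (u ^ (p ^ n), φ(u))` is a bijection
from `Rˣ` onto `{(r, s) : φ(r) = s ^ (p ^ n)}`: equivalently, the square formed by the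
`p^n`-th power maps and the maps induced by `φ` on unit groups is a pullback square. -/
theorem stmt5 (K R S : Type*) [Field K] [IsAlgClosed K] [CharZero K]
    [CommRing R] [Nontrivial R] [Algebra K R] [Algebra.FiniteType K R]
    [CommRing S] [Nontrivial S] [Algebra K S] [Algebra.FiniteType K S]
    (honeR : ∃! P : Ideal R, P.IsPrime) (honeS : ∃! Q : Ideal S, Q.IsPrime)
    (φ : R →ₐ[K] S) (p : ℕ) (hp : p.Prime) (n : ℕ) :
    Function.Injective (fun u : Rˣ => (u ^ p ^ n, Units.map (φ : R →* S) u)) ∧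
    Set.range (fun u : Rˣ => (u ^ p ^ n, Units.map (φ : R →* S) u)) =
      {rs : Rˣ × Sˣ | Units.map (φ : R →* S) rs.1 = rs.2 ^ p ^ n} := by
  have hpn : ((p ^ n : ℕ) : K) ≠ 0 := Nat.cast_ne_zero.mpr (pow_ne_zero n hp.ne_zero)
  have hφ (ζ : Kˣ) : Units.map (φ : R →* S) (Units.map (algebraMap K R : K →* R) ζ) =
      Units.map (algebraMap K S : K →* S) ζ := Units.ext (by simp)
  refine ⟨injective_pow_prodMk _ _ fun w hw hφw => ?_, range_pow_prodMk _ _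
    (Units.exists_pow_eq_of_existsUnique_isPrime honeR hpn) fun t ht => ?_⟩
  · obtain ⟨ζ, -, rfl⟩ := Units.exists_map_algebraMap_eq_of_pow_eq_one honeR hpn hw
    have hinj := Units.map_injective (f := (algebraMap K S : K →* S)) (algebraMap K S).injective
    rw [hφ, map_eq_one_iff _ hinj] at hφw
    rw [hφw, map_one]
  · obtain ⟨ζ, hζ, rfl⟩ := Units.exists_map_algebraMap_eq_of_pow_eq_one honeS hpn ht
    exact ⟨_, by rw [← map_pow, hζ, map_one], hφ ζ⟩
end
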